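/- For every n ≥ 0, p_2(n) is even. (Conjugation π ↦ π' is a fixed-point-free involution on the set of partitions of n with srank ≡ 2 (mod 4), since srank(π') = −srank(π) and any self-conjugate partition has srank 0.) -/

import Mathlib

open scoped Classical

namespace AndrewsStanley

/-- `O(π)`: the number of odd parts of the partition `π`. -/
def numOdd {n : ℕ} (π : n.Partition) : ℕ := (π.parts.filter (fun j => Odd j)).card

/-- The length of the `i`-th column (`i ≥ 1`) of the Young diagram of `π`,
i.e. the `i`-th part of the conjugate partition `π'`. -/
def colLen {n : ℕ} (π : n.Partition) (i : ℕ) : ℕ := (π.parts.filter (fun j => i ≤ j)).card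

/-- `O(π')`: the number of odd parts of the conjugate partition `π'`.
(All parts of `π` are at most `n`, so all columns of the diagram have index in `[1, n]`.) -/
def numOddConj {n : ℕ} (π : n.Partition) : ℕ :=
  ((Finset.Icc 1 n).filter (fun i => Odd (colLen π i))).card

/-- Stanley's statistic `srank(π) = O(π) - O(π')`. -/
def srank {n : ℕ} (π : n.Partition) : ℤ := (numOdd π : ℤ) - (numOddConj π : ℤ)

/-- A partition has no repeated even parts. -/
def NoRepEven {n : ℕ} (π : n.Partition) : Prop := ∀ j : ℕ, Even j → π.parts.count j ≤ 1

/-- `p_i(N)`: the number of partitions of `N` with `srank ≡ i (mod 4)`. -/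
noncomputable def pMod (i : ℤ) (N : ℕ) : ℕ :=
  (Finset.univ.filter (fun π : N.Partition => srank π % 4 = i)).card

/-- The Andrews–Garvan crank, defined on a multiset of parts: the largest part if there
are no ones, and otherwise the number of parts larger than the number of ones minus
the number of ones. -/
def mcrank (s : Multiset ℕ) : ℤ :=
  if s.count 1 = 0 then (s.sup : ℤ)
  else ((s.filter (fun j => s.count 1 < j)).card : ℤ) - (s.count 1 : ℤ)

/-- The parts of the partition `π₁` in which `j` occurs `⌊f_{2j}(π)/2⌋` times. -/
def halfEvenParts {n : ℕ} (π : n.Partition) : Multiset ℕ :=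
  (Finset.Icc 1 n).val.bind (fun j => Multiset.replicate (π.parts.count (2 * j) / 2) j)

/-- The second largest part `λ₂` of a partition (counted with multiplicity; `0` if
there are fewer than two parts). -/
def secondPart {n : ℕ} (π : n.Partition) : ℕ := (π.parts.erase π.parts.sup).sup

/-- Partitions of type B: either `π = (3,1)`, or `|π| ≠ 4`, `λ₁ - λ₂ ≥ 2`,
`λ'₁ - λ'₂ ≥ 2`, `λ₁ - 2` and `λ₂` are not identical even integers, and `π` has no
repeated even parts. -/
def TypeB {n : ℕ} (π : n.Partition) : Prop :=
  π.parts = {3, 1} ∨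
    (n ≠ 4 ∧ secondPart π + 2 ≤ π.parts.sup ∧ colLen π 2 + 2 ≤ colLen π 1 ∧
      ¬(π.parts.sup = secondPart π + 2 ∧ Even (secondPart π)) ∧ NoRepEven π)

/-- `stcrank(π) = crank(π₁) + srank(π)/2 + Ψ(π)` where `Ψ(π) = 1` iff `π` is of type B. -/
noncomputable def stcrank {n : ℕ} (π : n.Partition) : ℤ :=
  mcrank (halfEvenParts π) + srank π / 2 + (if TypeB π then 1 else 0)

/-- `P_i(k, m, N)`: the number of partitions of `N` with `srank ≡ i (mod 4)` and
`stcrank ≡ k (mod m)`. -/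
noncomputable def Pcount (i k : ℤ) (m : ℕ) (N : ℕ) : ℕ :=
  (Finset.univ.filter
    (fun π : N.Partition => srank π % 4 = i ∧ stcrank π % (m : ℤ) = k)).card

/-- The parts of `π` listed in (weakly) decreasing order. -/
def partsList {n : ℕ} (π : n.Partition) : List ℕ := (π.parts.sort (· ≤ ·)).reverse

/-- `λ_a`, the length of the `a`-th row (`a ≥ 1`) of the Young diagram of `π`. -/
def rowLen {n : ℕ} (π : n.Partition) (a : ℕ) : ℕ := (partsList π).getD (a - 1) 0

/-- The hook length of the cell in row `a` and column `b` (both `1`-indexed). -/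
def hookLen {n : ℕ} (π : n.Partition) (a b : ℕ) : ℕ :=
  (rowLen π a - b) + (colLen π b - a) + 1

/-- A partition is a `t`-core if no hook length of its Young diagram equals `t`. -/
def IsCore (t : ℕ) {n : ℕ} (π : n.Partition) : Prop :=
  ∀ a b : ℕ, 1 ≤ a → 1 ≤ b → b ≤ rowLen π a → hookLen π a b ≠ t

/-- `a_t(N)`: the number of partitions of `N` that are `t`-cores. -/
noncomputable def coreCount (t N : ℕ) : ℕ :=
  (Finset.univ.filter (fun π : N.Partition => IsCore t π)).card

/-- `r_j(π)`: the number of cells in row `a`, column `b` (1-indexed) of the Young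
diagram of `π` with `b - a ≡ j (mod 5)`. -/
noncomputable def rres {n : ℕ} (π : n.Partition) (j : ℕ) : ℕ :=
  ∑ a ∈ Finset.Icc 1 (Multiset.card π.parts),
    ((Finset.Icc 1 (rowLen π a)).filter (fun b => ((b : ℤ) - (a : ℤ)) % 5 = (j : ℤ))).card

/-- The Garvan–Kim–Stanton 5-core crank (as a representative modulo 5):
`d₅(π) = 2 + 2r₀(π) + r₁(π) - r₃(π) - 2r₄(π)`. -/
noncomputable def d5 {n : ℕ} (π : n.Partition) : ℤ :=
  2 + 2 * (rres π 0 : ℤ) + (rres π 1 : ℤ) - (rres π 3 : ℤ) - 2 * (rres π 4 : ℤ)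

/-- `a_{5,i}(N)`: the number of 5-core partitions of `N` with `srank ≡ i (mod 4)`. -/
noncomputable def a5srank (i : ℤ) (N : ℕ) : ℕ :=
  (Finset.univ.filter (fun π : N.Partition => IsCore 5 π ∧ srank π % 4 = i)).card

/-- The infinite product `∏_{j≥0} f j` of power series, in the situation (as for all
the products occurring here) where the factor `f j` is of the form `1 + (terms of
degree > j)`, so that the coefficient of `q^N` in the partial products stabilizes:
it is the corresponding coefficient in `∏_{j ≤ N} f j`. -/
noncomputable def infProd {R : Type*} [CommRing R] (f : ℕ → PowerSeries R) :
    PowerSeries R :=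
  PowerSeries.mk fun N => PowerSeries.coeff (R := R) N (∏ j ∈ Finset.range (N + 1), f j)

end AndrewsStanley

/-!
Conjugation negates `srank`, so it is an involution of the partitions counted by `p_2(n)`
without fixed points (those have `srank = 0`). On multisets of parts, `π'` is the multiset of
nonzero column lengths `λ'_i = #{parts ≥ i}`. Since `i ↦ λ'_i` is antitone, `{i | k ≤ λ'_i}` is
an interval `[1, m]`, whence `j ≤ λ''_k ↔ k ≤ λ'_j`; so `π''` has the same column lengths as `π`,
and a multiset of positive integers is determined by its column lengths.
-/

namespace Finset

theorem even_card_of_involution {ι : Type*} {s : Finset ι} (g : ι → ι)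
    (g_mem : ∀ a ∈ s, g a ∈ s) (g_g : ∀ a ∈ s, g (g a) = a) (g_ne : ∀ a ∈ s, g a ≠ a) :
    Even s.card := by
  rw [← ZMod.natCast_eq_zero_iff_even, card_eq_sum_ones, Nat.cast_sum, Nat.cast_one]
  exact sum_involution (fun a _ => g a) (fun _ _ => by decide)
    (fun a ha _ => g_ne a ha) g_mem g_g

theorem card_filter_Icc_le {m n : ℕ} (h : m ≤ n) : #{i ∈ Icc 1 n | i ≤ m} = m := by
  rw [show {i ∈ Icc 1 n | i ≤ m} = Icc 1 m by ext; simp; omega, Nat.card_Icc, Nat.add_sub_cancel]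

/-- A downward closed set of positive integers is an interval `[1, m]`. -/
theorem le_card_filter_Icc_iff {P : ℕ → Prop} [DecidablePred P]
    (hP : ∀ ⦃i j⦄, i ≤ j → P j → P i) {n k : ℕ} (hn : ∀ i, P i → i ≤ n) (hk : 1 ≤ k) :
    k ≤ #{i ∈ Icc 1 n | P i} ↔ P k := by
  constructor
  · intro hcard
    by_contra hPk
    have hsub : {i ∈ Icc 1 n | P i} ⊆ Icc 1 (k - 1) := by
      intro i hi
      simp only [mem_filter, mem_Icc] at hi ⊢
      exact ⟨hi.1.1, by_contra fun hik => hPk (hP (by omega) hi.2)⟩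
    have := card_le_card hsub
    rw [Nat.card_Icc] at this
    omega
  · intro hPk
    have hsub : Icc 1 k ⊆ {i ∈ Icc 1 n | P i} := by
      intro i hi
      simp only [mem_filter, mem_Icc] at hi ⊢
      exact ⟨⟨hi.1, hi.2.trans (hn k hPk)⟩, hP hi.2 hPk⟩
    simpa using card_le_card hsub

end Finset

namespace Multiset

open scoped Finset

def colLen (s : Multiset ℕ) (i : ℕ) : ℕ := s.countP (i ≤ ·)

/-- Meaningful when `n` bounds the parts of `s`: the zero column lengths beyond the largest part
are discarded. -/
def conjugate (n : ℕ) (s : Multiset ℕ) : Multiset ℕ :=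
  ((Finset.Icc 1 n).val.map s.colLen).filter (0 < ·)

variable {n : ℕ} {s : Multiset ℕ}

theorem colLen_antitone (s : Multiset ℕ) : Antitone s.colLen := fun _ _ hij => by
  simp only [colLen, countP_eq_card_filter]
  exact card_le_card (monotone_filter_right s fun _ h => hij.trans h)

theorem colLen_le_card (s : Multiset ℕ) (i : ℕ) : s.colLen i ≤ card s := countP_le_card _ _

theorem colLen_eq_zero (h : ∀ x ∈ s, x ≤ n) {i : ℕ} (hi : n < i) : s.colLen i = 0 :=
  countP_eq_zero.2 fun x hx hix => by have := h x hx; omega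

theorem count_add_colLen_succ (s : Multiset ℕ) (m : ℕ) :
    s.count m + s.colLen (m + 1) = s.colLen m := by
  induction s using Multiset.induction with
  | empty => simp [colLen]
  | cons a t ih =>
    simp only [colLen, countP_cons, count_cons] at ih ⊢
    split_ifs <;> omega

theorem eq_of_colLen_eq {t : Multiset ℕ} (hs : 0 ∉ s) (ht : 0 ∉ t)
    (h : ∀ j, 1 ≤ j → s.colLen j = t.colLen j) : s = t := by
  ext m
  rcases Nat.eq_zero_or_pos m with rfl | hm
  · rw [count_eq_zero.2 hs, count_eq_zero.2 ht]
  · have hs' := s.count_add_colLen_succ m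
    have ht' := t.count_add_colLen_succ m
    rw [h m hm, h (m + 1) (by omega)] at hs'
    omega

theorem countP_conjugate {p : ℕ → Prop} [DecidablePred p] (hp : ∀ x, p x → 0 < x) :
    (conjugate n s).countP p = #{i ∈ Finset.Icc 1 n | p (s.colLen i)} := by
  rw [conjugate, countP_filter, countP_congr rfl fun x _ => propext (and_iff_left_of_imp (hp x)),
    countP_map]
  rfl

theorem zero_notMem_conjugate : 0 ∉ conjugate n s := fun h => lt_irrefl 0 (of_mem_filter h)

theorem colLen_conjugate {k : ℕ} (hk : 1 ≤ k) :
    (conjugate n s).colLen k = #{i ∈ Finset.Icc 1 n | k ≤ s.colLen i} :=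
  countP_conjugate fun _ hx => by omega

theorem colLen_conjugate_conjugate (hle : ∀ x ∈ s, x ≤ n) (hcard : card s ≤ n) {j : ℕ}
    (hj : 1 ≤ j) : (conjugate n (conjugate n s)).colLen j = s.colLen j := by
  have key : ∀ k ∈ Finset.Icc 1 n, j ≤ (conjugate n s).colLen k ↔ k ≤ s.colLen j := by
    intro k hk
    have hk1 := (Finset.mem_Icc.1 hk).1
    rw [colLen_conjugate hk1]
    refine Finset.le_card_filter_Icc_iff (fun i i' hii' h => h.trans (s.colLen_antitone hii'))
      (fun i hi => ?_) hj
    by_contra hni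
    rw [colLen_eq_zero hle (not_le.1 hni)] at hi
    omega
  rw [colLen_conjugate hj, Finset.filter_congr key,
    Finset.card_filter_Icc_le ((s.colLen_le_card j).trans hcard)]

theorem conjugate_conjugate (hle : ∀ x ∈ s, x ≤ n) (hcard : card s ≤ n) (h0 : 0 ∉ s) :
    conjugate n (conjugate n s) = s :=
  eq_of_colLen_eq zero_notMem_conjugate h0 fun _ hj => colLen_conjugate_conjugate hle hcard hj

theorem sum_colLen (hle : ∀ x ∈ s, x ≤ n) : ∑ i ∈ Finset.Icc 1 n, s.colLen i = s.sum := by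
  induction s using Multiset.induction with
  | empty => simp [colLen]
  | cons a t ih =>
    simp only [colLen, countP_cons, sum_cons, Finset.sum_add_distrib] at ih ⊢
    rw [ih fun x hx => hle x (mem_cons_of_mem hx), ← Finset.card_filter,
      Finset.card_filter_Icc_le (hle a (mem_cons_self a t)), add_comm]

theorem sum_conjugate (hle : ∀ x ∈ s, x ≤ n) : (conjugate n s).sum = s.sum := by
  let t := (Finset.Icc 1 n).val.map s.colLen
  have hzero : (t.filter fun x => ¬0 < x).sum = 0 :=
    sum_eq_zero fun x hx => by have := of_mem_filter hx; omega
  calc (t.filter (0 < ·)).sum = (t.filter (0 < ·)).sum + (t.filter fun x => ¬0 < x).sum := by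
        rw [hzero, add_zero]
    _ = t.sum := by rw [← sum_add, filter_add_not]
    _ = s.sum := sum_colLen hle

end Multiset

namespace AndrewsStanley

theorem card_parts_le {n : ℕ} (π : n.Partition) : Multiset.card π.parts ≤ n := by
  simpa [π.parts_sum] using Multiset.card_nsmul_le_sum (s := π.parts) (a := 1)
    fun _ hx => π.parts_pos hx

theorem colLen_eq_colLen_parts {n : ℕ} (π : n.Partition) (i : ℕ) :
    colLen π i = π.parts.colLen i :=
  (Multiset.countP_eq_card_filter _ _).symm

def conjugate {n : ℕ} (π : n.Partition) : n.Partition where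
  parts := π.parts.conjugate n
  parts_pos hi := Multiset.of_mem_filter hi
  parts_sum := by rw [Multiset.sum_conjugate fun _ => Nat.Partition.le_of_mem_parts, π.parts_sum]

theorem conjugate_involutive {n : ℕ} : Function.Involutive (conjugate (n := n)) := fun π =>
  Nat.Partition.ext <| Multiset.conjugate_conjugate (fun _ => Nat.Partition.le_of_mem_parts)
    (card_parts_le π) fun h => lt_irrefl 0 (π.parts_pos h)

theorem numOdd_conjugate {n : ℕ} (π : n.Partition) : numOdd (conjugate π) = numOddConj π := by
  rw [numOdd, ← Multiset.countP_eq_card_filter]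
  simp only [numOddConj, colLen_eq_colLen_parts]
  exact Multiset.countP_conjugate fun _ h => h.pos

theorem srank_conjugate {n : ℕ} (π : n.Partition) : srank (conjugate π) = -srank π := by
  have h := numOdd_conjugate (conjugate π)
  rw [conjugate_involutive π] at h
  rw [srank, srank, numOdd_conjugate, ← h]
  ring

/-- `p_2(n)` is even for all `n ≥ 0`. -/
theorem p2_even (n : ℕ) : Even (pMod 2 n) := by
  refine Finset.even_card_of_involution conjugate (fun π hπ => ?_)
    (fun π _ => conjugate_involutive π) (fun π hπ hfix => ?_)
  · rw [Finset.mem_filter_univ] at hπ ⊢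
    rw [srank_conjugate]
    omega
  · have h := srank_conjugate π
    rw [hfix] at h
    rw [Finset.mem_filter_univ] at hπ
    omega

end AndrewsStanley
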